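/- arXiv:1702.04924 — 3 statements merged into one kernel-verified Lean document; each statement's English description precedes it below -/
import Mathlib

section
/- For positive semidefinite complex n×n matrices A and B, one has tr((√A − √B)²) ≤ ‖A − B‖₁, where √ denotes the positive semidefinite square root and ‖X‖₁ = tr(√(X†X)) is the trace norm. -/
open scoped ComplexOrder
noncomputable def Matrix.PosSemidef.sqrt {n : Type*} [Fintype n] [DecidableEq n]
    {A : Matrix n n ℂ} (hA : A.PosSemidef) : Matrix n n ℂ :=
  hA.1.eigenvectorUnitary.1 * Matrix.diagonal ((↑) ∘ (√·) ∘ hA.1.eigenvalues) *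
  (star hA.1.eigenvectorUnitary : Matrix n n ℂ)

namespace Matrix.PosSemidef
variable {n : Type*} [Fintype n] [DecidableEq n]

lemma sqrt_eq_cfc {A : Matrix n n ℂ} (hA : A.PosSemidef) : hA.sqrt = cfc Real.sqrt A := by
  rw [hA.1.cfc_eq, IsHermitian.cfc, Unitary.conjStarAlgAut_apply]; rfl

lemma posSemidef_sqrt {A : Matrix n n ℂ} (hA : A.PosSemidef) : hA.sqrt.PosSemidef := by
  have h := (Matrix.PosSemidef.diagonal (fun i => (Complex.zero_le_real.mpr
    (Real.sqrt_nonneg (hA.1.eigenvalues i)) : (0:ℂ) ≤ ((√(hA.1.eigenvalues i) : ℝ) : ℂ)))).mul_mul_conjTranspose_same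
    (hA.1.eigenvectorUnitary : Matrix n n ℂ)
  rw [sqrt, star_eq_conjTranspose]
  exact h

lemma sqrt_mul_self {A : Matrix n n ℂ} (hA : A.PosSemidef) : hA.sqrt * hA.sqrt = A := by
  rw [sqrt_eq_cfc, ← cfc_mul Real.sqrt Real.sqrt A]
  conv_rhs => rw [← cfc_id' ℝ A (ha := hA.1.isSelfAdjoint)]
  refine cfc_congr fun x hx => ?_
  have : 0 ≤ x := by
    rw [hA.1.spectrum_real_eq_range_eigenvalues] at hx
    obtain ⟨i, rfl⟩ := hx
    exact hA.eigenvalues_nonneg i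
  exact Real.mul_self_sqrt this

lemma eq_sqrt_of_sq_eq {B : Matrix n n ℂ} (hB : B.PosSemidef) {A : Matrix n n ℂ}
    (hA : A.PosSemidef) (h : B ^ 2 = A) : B = hA.sqrt := by
  rw [sqrt_eq_cfc, ← h, ← cfc_comp_pow (f := Real.sqrt) (n := 2) (a := B) (ha := hB.1.isSelfAdjoint)]
  conv_lhs => rw [← cfc_id' ℝ B (ha := hB.1.isSelfAdjoint)]
  refine cfc_congr fun x hx => ?_
  have : 0 ≤ x := by
    rw [hB.1.spectrum_real_eq_range_eigenvalues] at hx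
    obtain ⟨i, rfl⟩ := hx
    exact hB.eigenvalues_nonneg i
  exact (Real.sqrt_sq this).symm
end Matrix.PosSemidef

/-- The trace norm `‖X‖₁ = tr √(X†X)` of a complex matrix. -/
noncomputable def traceNorm {n : ℕ} (X : Matrix (Fin n) (Fin n) ℂ) : ℝ :=
  ((Matrix.posSemidef_conjTranspose_mul_self X).sqrt.trace).re

section Aux

open Matrix

namespace PowersStormerAux

variable {n : ℕ}

lemma trace_nonneg' {A : Matrix (Fin n) (Fin n) ℂ} (hA : A.PosSemidef) : 0 ≤ A.trace := by
  refine Finset.sum_nonneg fun i _ => ?_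
  simpa using hA.diag_nonneg (i := i)

lemma trace_mul_nonneg' {A B : Matrix (Fin n) (Fin n) ℂ}
    (hA : A.PosSemidef) (hB : B.PosSemidef) : 0 ≤ (A * B).trace := by
  have h1 : A * B = hA.sqrt * (hA.sqrt * B) := by rw [← mul_assoc, hA.sqrt_mul_self]
  have h2 : (hA.sqrt * B * hA.sqrt).PosSemidef := by
    have := hB.mul_mul_conjTranspose_same hA.sqrt
    rwa [hA.posSemidef_sqrt.1.eq] at this
  rw [h1, trace_mul_comm]
  exact trace_nonneg' h2

variable {R : Matrix (Fin n) (Fin n) ℂ} (hR : R.IsHermitian)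

noncomputable def fc (g : Fin n → ℂ) : Matrix (Fin n) (Fin n) ℂ :=
  (hR.eigenvectorUnitary : Matrix (Fin n) (Fin n) ℂ) * diagonal g *
    star (hR.eigenvectorUnitary : Matrix (Fin n) (Fin n) ℂ)

lemma fc_mul (g h : Fin n → ℂ) : fc hR g * fc hR h = fc hR (g * h) := by
  have hU : star (hR.eigenvectorUnitary : Matrix (Fin n) (Fin n) ℂ) *
      (hR.eigenvectorUnitary : Matrix (Fin n) (Fin n) ℂ) = 1 :=
    Matrix.mem_unitaryGroup_iff'.mp hR.eigenvectorUnitary.2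
  simp only [fc, Matrix.mul_assoc]
  rw [← Matrix.mul_assoc (star _) ((hR.eigenvectorUnitary : Matrix (Fin n) (Fin n) ℂ)), hU,
    one_mul, ← Matrix.mul_assoc (diagonal g), diagonal_mul_diagonal]
  rfl

lemma fc_add (g h : Fin n → ℂ) : fc hR g + fc hR h = fc hR (g + h) := by
  rw [fc, fc, fc, ← add_mul, ← mul_add, diagonal_add]
  rfl

lemma fc_one : fc hR 1 = 1 := by
  have hU : (hR.eigenvectorUnitary : Matrix (Fin n) (Fin n) ℂ) *
      star (hR.eigenvectorUnitary : Matrix (Fin n) (Fin n) ℂ) = 1 :=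
    Matrix.mem_unitaryGroup_iff.mp hR.eigenvectorUnitary.2
  rw [fc, Pi.one_def, diagonal_one, mul_one, hU]

lemma fc_neg (g : Fin n → ℂ) : fc hR (-g) = - fc hR g := by
  rw [fc, fc, show diagonal (-g) = -diagonal g from by rw [diagonal_neg]; rfl,
    mul_neg, neg_mul]

lemma fc_sub (g h : Fin n → ℂ) : fc hR g - fc hR h = fc hR (g - h) := by
  rw [sub_eq_add_neg, sub_eq_add_neg, ← fc_neg, fc_add]

lemma fc_posSemidef {g : Fin n → ℂ} (hg : ∀ i, 0 ≤ g i) : (fc hR g).PosSemidef := by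
  have h := (Matrix.PosSemidef.diagonal hg).mul_mul_conjTranspose_same
    (hR.eigenvectorUnitary : Matrix (Fin n) (Fin n) ℂ)
  rwa [fc, star_eq_conjTranspose]

lemma fc_trace (g : Fin n → ℂ) : (fc hR g).trace = ∑ i, g i := by
  have hU : star (hR.eigenvectorUnitary : Matrix (Fin n) (Fin n) ℂ) *
      (hR.eigenvectorUnitary : Matrix (Fin n) (Fin n) ℂ) = 1 :=
    Matrix.mem_unitaryGroup_iff'.mp hR.eigenvectorUnitary.2
  rw [fc, trace_mul_cycle, hU, one_mul, trace_diagonal]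

lemma fc_eigenvalues : fc hR (fun i => (hR.eigenvalues i : ℂ)) = R := by
  have := hR.spectral_theorem
  rw [Unitary.conjStarAlgAut_apply] at this
  rw [fc]
  exact this.symm

end PowersStormerAux

open PowersStormerAux in
theorem powers_stormer' {n : ℕ} (A B : Matrix (Fin n) (Fin n) ℂ)
    (hA : A.PosSemidef) (hB : B.PosSemidef) :
    ((hA.sqrt - hB.sqrt) * (hA.sqrt - hB.sqrt)).trace.re ≤
      ((Matrix.posSemidef_conjTranspose_mul_self (A - B)).sqrt.trace).re := by
  classical
  have hP : hA.sqrt.PosSemidef := hA.posSemidef_sqrt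
  have hQ : hB.sqrt.PosSemidef := hB.posSemidef_sqrt
  set P := hA.sqrt with hPdef
  set Q := hB.sqrt with hQdef
  set R := P - Q with hRdef
  have hR : R.IsHermitian := hP.1.sub hQ.1
  set T := P + Q with hTdef
  set D := A - B with hDdef
  have hD : D.IsHermitian := hA.1.sub hB.1
  set lam := hR.eigenvalues with hlam
  set mu := hD.eigenvalues with hmu
  -- functions for functional calculus
  set e : Fin n → ℂ := fun i => if 0 ≤ lam i then 1 else 0 with hedef
  set f : Fin n → ℂ := fun i => if 0 ≤ lam i then 0 else 1 with hfdef
  set gp : Fin n → ℂ := fun i => if 0 ≤ lam i then (lam i : ℂ) else 0 with hgpdef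
  set gm : Fin n → ℂ := fun i => if 0 ≤ lam i then 0 else (-(lam i) : ℂ) with hgmdef
  set Ep := fc hR e with hEpdef
  set Em := fc hR f with hEmdef
  set Rp := fc hR gp with hRpdef
  set Rm := fc hR gm with hRmdef
  have hfcR : fc hR (fun i => (lam i : ℂ)) = R := fc_eigenvalues hR
  -- basic algebraic identities
  have hEpEm : Ep + Em = 1 := by
    rw [hEpdef, hEmdef, fc_add]
    rw [show e + f = 1 by funext i; by_cases h : 0 ≤ lam i <;> simp [hedef, hfdef, h]]
    exact fc_one hR
  have hEpR : Ep * R = Rp := by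
    rw [hEpdef, hRpdef,
      show gp = e * (fun i => (lam i : ℂ)) from by
        funext i; by_cases h : 0 ≤ lam i <;> simp [hedef, hgpdef, h],
      ← fc_mul, hfcR]
  have hREp : R * Ep = Rp := by
    rw [hEpdef, hRpdef,
      show gp = (fun i => (lam i : ℂ)) * e from by
        funext i; by_cases h : 0 ≤ lam i <;> simp [hedef, hgpdef, h],
      ← fc_mul, hfcR]
  have hEmR : Em * R = -Rm := by
    rw [hEmdef, hRmdef,
      show gm = -(f * fun i => (lam i : ℂ)) from by
        funext i; by_cases h : 0 ≤ lam i <;> simp [hfdef, hgmdef, h],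
      fc_neg, neg_neg, ← fc_mul, hfcR]
  have hREm : R * Em = -Rm := by
    rw [hEmdef, hRmdef,
      show gm = -((fun i => (lam i : ℂ)) * f) from by
        funext i; by_cases h : 0 ≤ lam i <;> simp [hfdef, hgmdef, h],
      fc_neg, neg_neg, ← fc_mul, hfcR]
  -- positivity
  have hEpPSD : Ep.PosSemidef := by
    refine fc_posSemidef hR fun i => ?_
    by_cases h : 0 ≤ lam i <;> simp [hedef, h]
  have hEmPSD : Em.PosSemidef := by
    refine fc_posSemidef hR fun i => ?_
    by_cases h : 0 ≤ lam i <;> simp [hfdef, h]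
  have hRpPSD : Rp.PosSemidef := by
    refine fc_posSemidef hR fun i => ?_
    by_cases h : 0 ≤ lam i <;> simp [hgpdef, h]
  have hRmPSD : Rm.PosSemidef := by
    refine fc_posSemidef hR fun i => ?_
    by_cases h : 0 ≤ lam i <;> simp [hgmdef, h]
    · exact_mod_cast le_of_not_ge h
  -- key identity
  have key : R * T + T * R = D + D := by
    rw [hRdef, hTdef, hDdef, ← hA.sqrt_mul_self, ← hB.sqrt_mul_self, ← hPdef, ← hQdef]
    noncomm_ring
  -- trace identities
  have hEpD : (Ep * D).trace = (Rp * T).trace := by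
    have h1 : (Ep * (R * T)).trace = (Rp * T).trace := by rw [← Matrix.mul_assoc, hEpR]
    have h2 : (Ep * (T * R)).trace = (Rp * T).trace := by
      rw [← Matrix.mul_assoc, Matrix.trace_mul_cycle, hREp]
    have h3 : (Ep * D).trace + (Ep * D).trace = (Rp * T).trace + (Rp * T).trace := by
      rw [← Matrix.trace_add, ← Matrix.mul_add, ← key, Matrix.mul_add, Matrix.trace_add, h1, h2]
    linear_combination h3 / 2
  have hEmD : (Em * D).trace = -(Rm * T).trace := by
    have h1 : (Em * (R * T)).trace = -(Rm * T).trace := by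
      rw [← Matrix.mul_assoc, hEmR, Matrix.neg_mul, Matrix.trace_neg]
    have h2 : (Em * (T * R)).trace = -(Rm * T).trace := by
      rw [← Matrix.mul_assoc, Matrix.trace_mul_cycle, hREm, Matrix.neg_mul, Matrix.trace_neg]
    have h3 : (Em * D).trace + (Em * D).trace = -(Rm * T).trace + -(Rm * T).trace := by
      rw [← Matrix.trace_add, ← Matrix.mul_add, ← key, Matrix.mul_add, Matrix.trace_add, h1, h2]
    linear_combination h3 / 2
  -- splitting of tr(R*R)
  have hsplit : (R * R).trace = (Ep * (R * R)).trace + (Em * (R * R)).trace := by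
    rw [← Matrix.trace_add, ← Matrix.add_mul, hEpEm, Matrix.one_mul]
  -- bounds on each piece
  have hTmR : T - R = Q + Q := by rw [hTdef, hRdef]; abel
  have hTpR : T + R = P + P := by rw [hTdef, hRdef]; abel
  have hb1 : (Ep * (R * R)).trace ≤ (Ep * D).trace := by
    rw [← Matrix.mul_assoc, hEpR, hEpD]
    have h0 : 0 ≤ (Rp * (T - R)).trace := by
      rw [hTmR]; exact trace_mul_nonneg' hRpPSD (hQ.add hQ)
    rw [Matrix.mul_sub, Matrix.trace_sub] at h0
    exact sub_nonneg.mp h0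
  have hb2 : (Em * (R * R)).trace ≤ -(Em * D).trace := by
    rw [← Matrix.mul_assoc, hEmR, hEmD, neg_neg]
    have h0 : 0 ≤ (Rm * (T + R)).trace := by
      rw [hTpR]; exact trace_mul_nonneg' hRmPSD (hP.add hP)
    rw [Matrix.mul_add, Matrix.trace_add] at h0
    rw [Matrix.neg_mul, Matrix.trace_neg]
    calc -(Rm * R).trace
        ≤ -(Rm * R).trace + ((Rm * T).trace + (Rm * R).trace) := le_add_of_nonneg_right h0
      _ = (Rm * T).trace := by ring
  -- identification of the trace-norm square root
  set S := (Matrix.posSemidef_conjTranspose_mul_self (A - B)).sqrt with hSdef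
  have hfcD : fc hD (fun i => (mu i : ℂ)) = D := fc_eigenvalues hD
  have habsPSD : (fc hD fun i => ((|mu i| : ℝ) : ℂ)).PosSemidef :=
    fc_posSemidef hD fun i => Complex.zero_le_real.mpr (abs_nonneg _)
  have habs : fc hD (fun i => ((|mu i| : ℝ) : ℂ)) = S := by
    refine habsPSD.eq_sqrt_of_sq_eq _ ?_
    rw [pow_two, fc_mul,
      show ((fun i => ((|mu i| : ℝ) : ℂ)) * fun i => ((|mu i| : ℝ) : ℂ))
          = ((fun i => (mu i : ℂ)) * fun i => (mu i : ℂ)) from by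
        funext i
        simp only [Pi.mul_apply]
        norm_cast
        exact abs_mul_abs_self _,
      ← fc_mul, hfcD]
    rw [show ((A - B)ᴴ : Matrix (Fin n) (Fin n) ℂ) = A - B from hD.eq]
  have hSD : (S - D).PosSemidef := by
    have h2 : fc hD ((fun i => ((|mu i| : ℝ) : ℂ)) - fun i => (mu i : ℂ)) = S - D := by
      rw [← fc_sub, hfcD, habs]
    rw [← h2]
    refine fc_posSemidef hD fun i => ?_
    simp only [Pi.sub_apply]
    exact_mod_cast sub_nonneg.mpr (le_abs_self _)
  have hSpD : (S + D).PosSemidef := by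
    have h2 : fc hD ((fun i => ((|mu i| : ℝ) : ℂ)) + fun i => (mu i : ℂ)) = S + D := by
      rw [← fc_add, hfcD, habs]
    rw [← h2]
    refine fc_posSemidef hD fun i => ?_
    simp only [Pi.add_apply]
    exact_mod_cast (by linarith [neg_abs_le (mu i)] : (0:ℝ) ≤ |mu i| + mu i)
  have hb3 : (Ep * D).trace ≤ (Ep * S).trace := by
    have h0 : 0 ≤ (Ep * (S - D)).trace := trace_mul_nonneg' hEpPSD hSD
    rw [Matrix.mul_sub, Matrix.trace_sub] at h0
    exact sub_nonneg.mp h0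
  have hb4 : -(Em * D).trace ≤ (Em * S).trace := by
    have h0 : 0 ≤ (Em * (S + D)).trace := trace_mul_nonneg' hEmPSD hSpD
    rw [Matrix.mul_add, Matrix.trace_add] at h0
    calc -(Em * D).trace
        ≤ -(Em * D).trace + ((Em * S).trace + (Em * D).trace) := le_add_of_nonneg_right h0
      _ = (Em * S).trace := by ring
  have hSsplit : (Ep * S).trace + (Em * S).trace = S.trace := by
    rw [← Matrix.trace_add, ← Matrix.add_mul, hEpEm, Matrix.one_mul]
  have final : (R * R).trace ≤ S.trace := by
    rw [hsplit, ← hSsplit]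
    exact add_le_add (le_trans hb1 hb3) (le_trans hb2 hb4)
  exact (Complex.le_def.mp final).1


end Aux

/-- Powers–Størmer inequality: for positive semidefinite matrices `A, B`,
`tr((√A − √B)²) ≤ ‖A − B‖₁`. -/
theorem powers_stormer {n : ℕ} (A B : Matrix (Fin n) (Fin n) ℂ)
    (hA : A.PosSemidef) (hB : B.PosSemidef) :
    ((hA.sqrt - hB.sqrt) * (hA.sqrt - hB.sqrt)).trace.re ≤ traceNorm (A - B) := by
  exact powers_stormer' A B hA hB
end

section
/- Let ρ and σ be positive definite n×n complex matrices with ρ ≤ σ (i.e., σ − ρ positive semidefinite). Then tr(ρ·(log ρ − log σ)) ≤ 0. -/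
open scoped ComplexOrder

/-- The logarithm of a Hermitian matrix, via the spectral decomposition. -/
noncomputable def matLog {n : ℕ} {A : Matrix (Fin n) (Fin n) ℂ} (hA : A.IsHermitian) :
    Matrix (Fin n) (Fin n) ℂ :=
  (hA.eigenvectorUnitary : Matrix (Fin n) (Fin n) ℂ) *
    Matrix.diagonal (fun i => (Real.log (hA.eigenvalues i) : ℂ)) *
    star (hA.eigenvectorUnitary : Matrix (Fin n) (Fin n) ℂ)

section Aux
open Matrix
variable {n : ℕ}

lemma matLog_isHermitian {A : Matrix (Fin n) (Fin n) ℂ} (hA : A.IsHermitian) :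
    (matLog hA).IsHermitian := by
  unfold matLog Matrix.IsHermitian
  rw [Matrix.conjTranspose_mul, Matrix.conjTranspose_mul, Matrix.diagonal_conjTranspose]
  simp only [Matrix.star_eq_conjTranspose, Matrix.conjTranspose_conjTranspose]
  rw [Matrix.mul_assoc]
  have : (star fun i => (Real.log (hA.eigenvalues i) : ℂ))
      = fun i => (Real.log (hA.eigenvalues i) : ℂ) :=
    funext fun i => Complex.conj_ofReal _
  rw [this]

lemma psd_trace_nonneg {M : Matrix (Fin n) (Fin n) ℂ} (hM : M.PosSemidef) : 0 ≤ M.trace := by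
  have hd : ∀ i, 0 ≤ M i i := by
    intro i
    have := hM.dotProduct_mulVec_nonneg (Pi.single i 1)
    simpa [Matrix.mulVec_single, dotProduct, Pi.single_apply,
      Finset.sum_ite_eq, apply_ite] using this
  exact Finset.sum_nonneg fun i _ => hd i

lemma trace_mul_psd_nonneg {ρ M : Matrix (Fin n) (Fin n) ℂ} (hρ : ρ.PosSemidef)
    (hM : M.PosSemidef) : 0 ≤ (ρ * M).trace := by
  obtain ⟨C, hC⟩ : ∃ C : Matrix (Fin n) (Fin n) ℂ, ρ = Cᴴ * C := by
    open scoped MatrixOrder in exact CStarAlgebra.nonneg_iff_eq_star_mul_self.mp hρ.nonneg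
  have hP : (C * M * Cᴴ).PosSemidef := hM.mul_mul_conjTranspose_same C
  have heq : (ρ * M).trace = (C * M * Cᴴ).trace := by
    rw [hC, Matrix.mul_assoc, Matrix.trace_mul_comm, Matrix.mul_assoc]
  rw [heq]
  exact psd_trace_nonneg hP

open MeasureTheory Real Filter Set in

/-- Scalar core: if the resolvent quadratic forms dominate, logs compare. -/
lemma key_real {n : ℕ} (a b u v : Fin n → ℝ) (ha : ∀ i, 0 < a i) (hb : ∀ i, 0 < b i)
    (hu : ∀ i, 0 ≤ u i) (hsum : ∑ i, u i = ∑ i, v i)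
    (hle : ∀ t : ℝ, 0 < t → ∑ i, v i / (b i + t) ≤ ∑ i, u i / (a i + t)) :
    ∑ i, u i * Real.log (a i) ≤ ∑ i, v i * Real.log (b i) := by
  set H : ℝ → ℝ := fun t => (∑ i, u i * Real.log (a i + t)) - ∑ i, v i * Real.log (b i + t)
    with hH
  set h : ℝ → ℝ := fun t => (∑ i, u i / (a i + t)) - ∑ i, v i / (b i + t) with hh
  have hpos : ∀ t ∈ Ioi (0:ℝ), 0 ≤ h t := fun t ht => sub_nonneg.2 (hle t ht)
  have hderiv : ∀ t ∈ Ici (0:ℝ), HasDerivAt H (h t) t := by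
    intro t ht
    have h1 : HasDerivAt (fun t => ∑ i, u i * Real.log (a i + t))
        (∑ i, u i / (a i + t)) t := by
      apply HasDerivAt.fun_sum
      intro i _
      have : HasDerivAt (fun t => Real.log (a i + t)) (1 / (a i + t)) t := by
        have ht' : (0:ℝ) ≤ t := ht
        have hne : a i + t ≠ 0 := by have := ha i; intro hc; linarith
        simpa [one_div] using
          ((hasDerivAt_id t).const_add (a i)).log hne
      simpa [div_eq_mul_inv, mul_comm, mul_assoc, one_div] using this.const_mul (u i)
    have h2 : HasDerivAt (fun t => ∑ i, v i * Real.log (b i + t))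
        (∑ i, v i / (b i + t)) t := by
      apply HasDerivAt.fun_sum
      intro i _
      have : HasDerivAt (fun t => Real.log (b i + t)) (1 / (b i + t)) t := by
        have ht' : (0:ℝ) ≤ t := ht
        have hne : b i + t ≠ 0 := by have := hb i; intro hc; linarith
        simpa [one_div] using
          ((hasDerivAt_id t).const_add (b i)).log hne
      simpa [div_eq_mul_inv, mul_comm, mul_assoc, one_div] using this.const_mul (v i)
    exact h1.sub h2
  have htend : Tendsto H atTop (nhds 0) := by
    have hrw : ∀ t : ℝ, H t = (∑ i, u i * (Real.log (a i + t) - Real.log (1 + t)))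
        - ∑ i, v i * (Real.log (b i + t) - Real.log (1 + t)) := by
      intro t
      simp only [mul_sub, Finset.sum_sub_distrib, ← Finset.sum_mul, hsum, hH]
      ring
    have hterm : ∀ c : ℝ, 0 < c →
        Tendsto (fun t : ℝ => Real.log (c + t) - Real.log (1 + t)) atTop (nhds 0) := by
      intro c hc
      have h1 : ∀ᶠ t : ℝ in atTop, Real.log (c + t) - Real.log (1 + t)
          = Real.log ((c + t) / (1 + t)) := by
        filter_upwards [eventually_gt_atTop 0] with t ht
        rw [Real.log_div (by positivity) (by positivity)]
      have h2 : Tendsto (fun t : ℝ => (c + t) / (1 + t)) atTop (nhds 1) := by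
        have hev : (fun t : ℝ => 1 + (c - 1) / (1 + t)) =ᶠ[atTop]
            (fun t : ℝ => (c + t) / (1 + t)) := by
          filter_upwards [eventually_gt_atTop 0] with t ht
          have : (1:ℝ) + t ≠ 0 := by linarith
          field_simp
          ring
        have h3 : Tendsto (fun t : ℝ => (c - 1) / (1 + t)) atTop (nhds 0) :=
          Tendsto.div_atTop tendsto_const_nhds (tendsto_atTop_add_const_left _ _ tendsto_id)
        have h4 : Tendsto (fun t : ℝ => 1 + (c - 1) / (1 + t)) atTop (nhds 1) := by
          simpa using h3.const_add 1
        exact Tendsto.congr' hev h4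
      have h5 := (Real.continuousAt_log one_ne_zero).tendsto.comp h2
      apply Tendsto.congr' (EventuallyEq.symm h1)
      simpa [Function.comp_def] using h5
    rw [tendsto_congr hrw]
    have g1 : Tendsto (fun t => ∑ i, u i * (Real.log (a i + t) - Real.log (1 + t)))
        atTop (nhds 0) := by
      have := tendsto_finset_sum (Finset.univ : Finset (Fin n))
        (fun i _ => ((hterm (a i) (ha i)).const_mul (u i)))
      simpa using this
    have g2 : Tendsto (fun t => ∑ i, v i * (Real.log (b i + t) - Real.log (1 + t)))
        atTop (nhds 0) := by
      have := tendsto_finset_sum (Finset.univ : Finset (Fin n))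
        (fun i _ => ((hterm (b i) (hb i)).const_mul (v i)))
      simpa using this
    simpa using g1.sub g2
  have hint : IntegrableOn h (Ioi (0:ℝ)) :=
    integrableOn_Ioi_deriv_of_nonneg' hderiv hpos htend
  have heq : ∫ t in Ioi (0:ℝ), h t = 0 - H 0 :=
    integral_Ioi_of_hasDerivAt_of_tendsto' hderiv hint htend
  have hnn : 0 ≤ ∫ t in Ioi (0:ℝ), h t :=
    setIntegral_nonneg measurableSet_Ioi hpos
  rw [heq] at hnn
  have : H 0 ≤ 0 := by linarith
  simpa [hH] using this

variable {n : ℕ}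

/-- For Hermitian M, ⟪M a, b⟫ = ⟪a, M b⟫ in dotProduct form. -/
lemma herm_shift {M : Matrix (Fin n) (Fin n) ℂ} (hM : M.IsHermitian) (a b : Fin n → ℂ) :
    star (M *ᵥ a) ⬝ᵥ b = star a ⬝ᵥ (M *ᵥ b) := by
  rw [star_mulVec, ← dotProduct_mulVec, hM.eq]

/-- Inverse is antitone in the quadratic-form sense. -/
lemma inv_qf_antitone {A B : Matrix (Fin n) (Fin n) ℂ} (hA : A.PosDef) (hB : B.PosDef)
    (h : (B - A).PosSemidef) (x : Fin n → ℂ) :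
    star x ⬝ᵥ B⁻¹ *ᵥ x ≤ star x ⬝ᵥ A⁻¹ *ᵥ x := by
  have hAinv : (A⁻¹).IsHermitian := hA.1.inv
  have hBinv : (B⁻¹).IsHermitian := hB.1.inv
  have hAu : A * A⁻¹ = 1 := mul_nonsing_inv A hA.det_pos.ne'.isUnit
  have hBu : B * B⁻¹ = 1 := mul_nonsing_inv B hB.det_pos.ne'.isUnit
  set u : Fin n → ℂ := A⁻¹ *ᵥ x with hu
  set y : Fin n → ℂ := B⁻¹ *ᵥ x with hy
  have hAu' : A *ᵥ u = x := by rw [hu, mulVec_mulVec, hAu, one_mulVec]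
  have hBu' : B *ᵥ y = x := by rw [hy, mulVec_mulVec, hBu, one_mulVec]
  have e1 : star u ⬝ᵥ (A *ᵥ u) = star x ⬝ᵥ A⁻¹ *ᵥ x := by
    rw [hAu', hu, ← herm_shift hAinv x x]
  have e2 : star u ⬝ᵥ (A *ᵥ y) = star x ⬝ᵥ B⁻¹ *ᵥ x := by
    rw [← herm_shift hA.1 u y, hAu']
  have e3 : star y ⬝ᵥ (A *ᵥ u) = star x ⬝ᵥ B⁻¹ *ᵥ x := by
    rw [hAu', hy, ← herm_shift hBinv x x]
  have e4 : star y ⬝ᵥ (B *ᵥ y) = star x ⬝ᵥ B⁻¹ *ᵥ x := by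
    rw [hBu', hy, ← herm_shift hBinv x x]
  have k1 : 0 ≤ star (u - y) ⬝ᵥ (A *ᵥ (u - y)) := hA.posSemidef.dotProduct_mulVec_nonneg (u - y)
  have k2 : 0 ≤ star y ⬝ᵥ ((B - A) *ᵥ y) := h.dotProduct_mulVec_nonneg y
  have expand : star (u - y) ⬝ᵥ (A *ᵥ (u - y)) + star y ⬝ᵥ ((B - A) *ᵥ y)
      = star x ⬝ᵥ A⁻¹ *ᵥ x - star x ⬝ᵥ B⁻¹ *ᵥ x := by
    simp only [mulVec_sub, sub_mulVec, star_sub, dotProduct_sub, sub_dotProduct]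
    rw [e1, e2, e3, e4]
    have e5 : star y ⬝ᵥ (A *ᵥ y) = star y ⬝ᵥ (A *ᵥ y) := rfl
    ring
  have h0 := add_nonneg k1 k2
  rw [expand] at h0
  exact sub_nonneg.1 h0

lemma qf_conj_diag (V : Matrix (Fin n) (Fin n) ℂ) (g : Fin n → ℂ) (x : Fin n → ℂ) :
    star x ⬝ᵥ (V * Matrix.diagonal g * star V) *ᵥ x
      = ∑ i, g i * ((Complex.normSq ((star V *ᵥ x) i) : ℂ)) := by
  set y := star V *ᵥ x with hy
  have hsy : star y = star x ᵥ* V := by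
    rw [hy, star_mulVec]
    congr 1
    simp [Matrix.star_eq_conjTranspose]
  have h1 : (V * Matrix.diagonal g * star V) *ᵥ x = V *ᵥ (Matrix.diagonal g *ᵥ y) := by
    rw [hy, mulVec_mulVec, mulVec_mulVec]
  rw [h1, dotProduct_mulVec, ← hsy]
  simp only [dotProduct, mulVec_diagonal, Pi.star_apply]
  refine Finset.sum_congr rfl fun i _ => ?_
  have : star (y i) * y i = (Complex.normSq (y i) : ℂ) := by
    rw [Complex.star_def, ← Complex.normSq_eq_conj_mul_self]
  rw [show star (y i) * (g i * y i) = g i * (star (y i) * y i) by ring, this]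

lemma unitary_conj_diag_inv {V : Matrix (Fin n) (Fin n) ℂ}
    (hV : V ∈ Matrix.unitaryGroup (Fin n) ℂ) (g : Fin n → ℂ) (hg : ∀ i, g i ≠ 0) :
    (V * Matrix.diagonal g * star V)⁻¹ = V * Matrix.diagonal (fun i => (g i)⁻¹) * star V := by
  apply inv_eq_right_inv
  have h1 : star V * V = 1 := hV.1
  have h2 : Matrix.diagonal g * Matrix.diagonal (fun i => (g i)⁻¹) = 1 := by
    rw [Matrix.diagonal_mul_diagonal]
    have : (fun i => g i * (g i)⁻¹) = fun _ : Fin n => (1:ℂ) :=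
      funext fun i => mul_inv_cancel₀ (hg i)
    rw [this, Matrix.diagonal_one]
  calc V * Matrix.diagonal g * star V * (V * Matrix.diagonal (fun i => (g i)⁻¹) * star V)
      = V * Matrix.diagonal g * (star V * V) * Matrix.diagonal (fun i => (g i)⁻¹) * star V := by
        simp only [Matrix.mul_assoc]
    _ = V * (Matrix.diagonal g * Matrix.diagonal (fun i => (g i)⁻¹)) * star V := by
        rw [h1]; simp only [Matrix.mul_one, Matrix.mul_assoc]
    _ = 1 := by rw [h2, Matrix.mul_one]; exact hV.2

lemma shifted_spectral {A : Matrix (Fin n) (Fin n) ℂ} (hA : A.IsHermitian) (t : ℝ) :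
    A + (t : ℂ) • 1 = (hA.eigenvectorUnitary : Matrix (Fin n) (Fin n) ℂ) *
      Matrix.diagonal (fun i => ((hA.eigenvalues i + t : ℝ) : ℂ)) *
      star (hA.eigenvectorUnitary : Matrix (Fin n) (Fin n) ℂ) := by
  set V := (hA.eigenvectorUnitary : Matrix (Fin n) (Fin n) ℂ) with hV
  have hVu : V * star V = 1 := (Matrix.mem_unitaryGroup_iff).mp hA.eigenvectorUnitary.2
  have h1 : (t : ℂ) • (1 : Matrix (Fin n) (Fin n) ℂ)
      = V * Matrix.diagonal (fun _ => (t : ℂ)) * star V := by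
    have : Matrix.diagonal (fun _ : Fin n => (t : ℂ)) = (t : ℂ) • 1 := by
      ext i j
      by_cases hij : i = j <;> simp [Matrix.diagonal_apply, Matrix.one_apply, hij]
    rw [this]
    rw [Matrix.mul_smul, Matrix.smul_mul, Matrix.mul_one, hVu]
  conv_lhs => rw [hA.spectral_theorem, Unitary.conjStarAlgAut_apply, ← hV, h1]
  rw [← Matrix.add_mul, ← Matrix.mul_add, Matrix.diagonal_add]
  congr 2
  funext i
  simp [Function.comp]

lemma smul_one_diag (t : ℝ) : (t : ℂ) • (1 : Matrix (Fin n) (Fin n) ℂ)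
    = Matrix.diagonal (fun _ : Fin n => (t : ℂ)) := by
  ext i j
  by_cases hij : i = j <;> simp [Matrix.diagonal_apply, Matrix.one_apply, hij]

lemma matLog_monotone {A B : Matrix (Fin n) (Fin n) ℂ} (hA : A.PosDef) (hB : B.PosDef)
    (h : (B - A).PosSemidef) : (matLog hB.1 - matLog hA.1).PosSemidef := by
  refine posSemidef_iff_dotProduct_mulVec.mpr
    ⟨(matLog_isHermitian hB.1).sub (matLog_isHermitian hA.1), fun x => ?_⟩
  set VA := (hA.1.eigenvectorUnitary : Matrix (Fin n) (Fin n) ℂ) with hVA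
  set VB := (hB.1.eigenvectorUnitary : Matrix (Fin n) (Fin n) ℂ) with hVB
  set a : Fin n → ℝ := hA.1.eigenvalues with ha
  set b : Fin n → ℝ := hB.1.eigenvalues with hb
  set u : Fin n → ℝ := fun i => Complex.normSq ((star VA *ᵥ x) i) with hu
  set v : Fin n → ℝ := fun i => Complex.normSq ((star VB *ᵥ x) i) with hv
  -- quadratic forms of the logs
  have qA : star x ⬝ᵥ (matLog hA.1) *ᵥ x = ((∑ i, u i * Real.log (a i) : ℝ) : ℂ) := by
    rw [show matLog hA.1 = VA * Matrix.diagonal (fun i => (Real.log (a i) : ℂ)) * star VA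
      from rfl, qf_conj_diag]
    push_cast
    exact Finset.sum_congr rfl fun i _ => by ring
  have qB : star x ⬝ᵥ (matLog hB.1) *ᵥ x = ((∑ i, v i * Real.log (b i) : ℝ) : ℂ) := by
    rw [show matLog hB.1 = VB * Matrix.diagonal (fun i => (Real.log (b i) : ℂ)) * star VB
      from rfl, qf_conj_diag]
    push_cast
    exact Finset.sum_congr rfl fun i _ => by ring
  -- sums of weights agree
  have hsum : ∑ i, u i = ∑ i, v i := by
    have e1 : VA * Matrix.diagonal (fun _ : Fin n => (1:ℂ)) * star VA = 1 := by
      rw [Matrix.diagonal_one, Matrix.mul_one]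
      exact (Matrix.mem_unitaryGroup_iff).mp hA.1.eigenvectorUnitary.2
    have e2 : VB * Matrix.diagonal (fun _ : Fin n => (1:ℂ)) * star VB = 1 := by
      rw [Matrix.diagonal_one, Matrix.mul_one]
      exact (Matrix.mem_unitaryGroup_iff).mp hB.1.eigenvectorUnitary.2
    have s1 := qf_conj_diag VA (fun _ => (1:ℂ)) x
    have s2 := qf_conj_diag VB (fun _ => (1:ℂ)) x
    rw [e1] at s1
    rw [e2] at s2
    simp only [one_mul] at s1 s2
    have : ((∑ i, u i : ℝ) : ℂ) = ((∑ i, v i : ℝ) : ℂ) := by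
      push_cast
      simp only [hu, hv]
      rw [← s1, ← s2]
    exact_mod_cast this
  -- resolvent comparison
  have hle : ∀ t : ℝ, 0 < t → ∑ i, v i / (b i + t) ≤ ∑ i, u i / (a i + t) := by
    intro t ht
    have hpsd : ((t:ℂ) • (1 : Matrix (Fin n) (Fin n) ℂ)).PosSemidef := by
      rw [smul_one_diag]
      exact Matrix.PosSemidef.diagonal fun i => Complex.zero_le_real.2 ht.le
    have hAt : (A + (t:ℂ) • 1).PosDef := hA.add_posSemidef hpsd
    have hBt : (B + (t:ℂ) • 1).PosDef := hB.add_posSemidef hpsd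
    have hdiff : ((B + (t:ℂ) • 1) - (A + (t:ℂ) • 1)).PosSemidef := by
      rw [add_sub_add_right_eq_sub]
      exact h
    have hcompare := inv_qf_antitone hAt hBt hdiff x
    have hga : ∀ i, ((a i + t : ℝ) : ℂ) ≠ 0 := fun i => by
      exact_mod_cast ne_of_gt (by have := hA.eigenvalues_pos i; rw [← ha] at this; linarith)
    have hgb : ∀ i, ((b i + t : ℝ) : ℂ) ≠ 0 := fun i => by
      exact_mod_cast ne_of_gt (by have := hB.eigenvalues_pos i; rw [← hb] at this; linarith)
    have eA : (A + (t:ℂ) • 1)⁻¹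
        = VA * Matrix.diagonal (fun i => (((a i + t : ℝ) : ℂ))⁻¹) * star VA := by
      rw [shifted_spectral hA.1 t, unitary_conj_diag_inv hA.1.eigenvectorUnitary.2 _ hga]
    have eB : (B + (t:ℂ) • 1)⁻¹
        = VB * Matrix.diagonal (fun i => (((b i + t : ℝ) : ℂ))⁻¹) * star VB := by
      rw [shifted_spectral hB.1 t, unitary_conj_diag_inv hB.1.eigenvectorUnitary.2 _ hgb]
    rw [eA, eB, qf_conj_diag, qf_conj_diag] at hcompare
    have cA : ∑ i, (((a i + t : ℝ) : ℂ))⁻¹ * ((Complex.normSq ((star VA *ᵥ x) i) : ℂ))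
        = ((∑ i, u i / (a i + t) : ℝ) : ℂ) := by
      push_cast
      exact Finset.sum_congr rfl fun i _ => by rw [div_eq_mul_inv]; ring
    have cB : ∑ i, (((b i + t : ℝ) : ℂ))⁻¹ * ((Complex.normSq ((star VB *ᵥ x) i) : ℂ))
        = ((∑ i, v i / (b i + t) : ℝ) : ℂ) := by
      push_cast
      exact Finset.sum_congr rfl fun i _ => by rw [div_eq_mul_inv]; ring
    rw [cA, cB] at hcompare
    exact Complex.real_le_real.mp hcompare
  have hapos : ∀ i, 0 < a i := fun i => hA.eigenvalues_pos i
  have hbpos : ∀ i, 0 < b i := fun i => hB.eigenvalues_pos i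
  have key := key_real a b u v hapos hbpos (fun i => Complex.normSq_nonneg _) hsum hle
  rw [Matrix.sub_mulVec, dotProduct_sub, qA, qB, ← Complex.ofReal_sub]
  exact Complex.zero_le_real.2 (by linarith)

end Aux

/-- If `ρ ≤ σ` (positive definite matrices), then `tr(ρ(log ρ − log σ)) ≤ 0`. -/
theorem trace_mul_log_sub_log_nonpos {n : ℕ} (ρ σ : Matrix (Fin n) (Fin n) ℂ)
    (hρ : ρ.PosDef) (hσ : σ.PosDef) (h : (σ - ρ).PosSemidef) :
    (ρ * (matLog hρ.1 - matLog hσ.1)).trace ≤ 0 := by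
  have hM : (matLog hσ.1 - matLog hρ.1).PosSemidef := matLog_monotone hρ hσ h
  have h1 : 0 ≤ (ρ * (matLog hσ.1 - matLog hρ.1)).trace :=
    trace_mul_psd_nonneg hρ.posSemidef hM
  have h2 : ρ * (matLog hρ.1 - matLog hσ.1) = -(ρ * (matLog hσ.1 - matLog hρ.1)) := by
    rw [Matrix.mul_sub, Matrix.mul_sub]
    abel
  rw [h2, Matrix.trace_neg]
  exact neg_nonpos.2 h1
end

section
/- Let A be a positive semidefinite n×n complex matrix, V an n×n complex matrix with operator norm ‖V‖ ≤ 1, and 0 < α ≤ 1. Then V† A^α V ≤ (V† A V)^α in the Loewner order (i.e., (V†AV)^α − V†A^αV is positive semidefinite). -/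
open scoped ComplexOrder
open Matrix

namespace HansenAux

variable {n : ℕ}

/-- Functional calculus via spectral decomposition. -/
noncomputable def cfcM {A : Matrix (Fin n) (Fin n) ℂ} (hA : A.IsHermitian) (f : ℝ → ℝ) :
    Matrix (Fin n) (Fin n) ℂ :=
  (hA.eigenvectorUnitary : Matrix (Fin n) (Fin n) ℂ) *
    Matrix.diagonal (fun i => ((f (hA.eigenvalues i) : ℝ) : ℂ)) *
    star (hA.eigenvectorUnitary : Matrix (Fin n) (Fin n) ℂ)

variable {A : Matrix (Fin n) (Fin n) ℂ} (hA : A.IsHermitian)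

lemma cfcM_isHermitian (f : ℝ → ℝ) : (cfcM hA f).IsHermitian := by
  unfold cfcM
  set U : Matrix (Fin n) (Fin n) ℂ := (hA.eigenvectorUnitary : Matrix (Fin n) (Fin n) ℂ)
  unfold Matrix.IsHermitian
  simp [conjTranspose_mul, Matrix.mul_assoc, diagonal_conjTranspose]
  congr 1
  ext i j
  simp [Matrix.diagonal]
  aesop

lemma cfcM_id : cfcM hA (fun t => t) = A := by
  conv_rhs => rw [hA.spectral_theorem]
  rfl

lemma cfcM_congr {f g : ℝ → ℝ} (h : ∀ i, f (hA.eigenvalues i) = g (hA.eigenvalues i)) :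
    cfcM hA f = cfcM hA g := by
  unfold cfcM
  congr 1
  ext i j
  simp [Matrix.diagonal]
  aesop

/-- coordinates in the eigenbasis -/
noncomputable def coords (x : Fin n → ℂ) : Fin n → ℂ :=
  star (hA.eigenvectorUnitary : Matrix (Fin n) (Fin n) ℂ) *ᵥ x

lemma coords_cfcM_mulVec (f : ℝ → ℝ) (x : Fin n → ℂ) :
    coords hA (cfcM hA f *ᵥ x) = fun i => (f (hA.eigenvalues i) : ℂ) * coords hA x i := by
  unfold coords cfcM
  rw [mulVec_mulVec, ← Matrix.mul_assoc, ← Matrix.mul_assoc,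
    (Matrix.mem_unitaryGroup_iff').mp (hA.eigenvectorUnitary).2]
  rw [Matrix.one_mul, ← mulVec_mulVec]
  ext i
  simp [mulVec_diagonal]

lemma dotProduct_coords (x y : Fin n → ℂ) :
    star (coords hA x) ⬝ᵥ coords hA y = star x ⬝ᵥ y := by
  unfold coords
  rw [star_mulVec, dotProduct_mulVec, vecMul_vecMul]
  rw [star_eq_conjTranspose, conjTranspose_conjTranspose, ← star_eq_conjTranspose,
    (Matrix.mem_unitaryGroup_iff).mp (hA.eigenvectorUnitary).2, vecMul_one]


/-- squared euclidean norm -/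
noncomputable def sqn (v : Fin n → ℂ) : ℝ := ∑ i, Complex.normSq (v i)

lemma sqn_nonneg (v : Fin n → ℂ) : 0 ≤ sqn v :=
  Finset.sum_nonneg fun i _ => Complex.normSq_nonneg _

lemma dotProduct_star_self (v : Fin n → ℂ) : star v ⬝ᵥ v = ((sqn v : ℝ) : ℂ) := by
  simp only [dotProduct, sqn, Pi.star_apply]
  push_cast
  refine Finset.sum_congr rfl fun i _ => ?_
  rw [Complex.normSq_eq_conj_mul_self]
  rfl

lemma sqn_coords (x : Fin n → ℂ) : sqn (coords hA x) = sqn x := by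
  have h := dotProduct_coords hA x x
  rw [dotProduct_star_self, dotProduct_star_self] at h
  exact_mod_cast h

lemma quadform (f : ℝ → ℝ) (x : Fin n → ℂ) :
    star x ⬝ᵥ (cfcM hA f *ᵥ x) =
      ((∑ i, f (hA.eigenvalues i) * Complex.normSq (coords hA x i) : ℝ) : ℂ) := by
  rw [← dotProduct_coords hA x (cfcM hA f *ᵥ x), coords_cfcM_mulVec]
  simp only [dotProduct, Pi.star_apply]
  push_cast
  refine Finset.sum_congr rfl fun i _ => ?_
  rw [Complex.normSq_eq_conj_mul_self]
  simp only [Pi.star_apply, RCLike.star_def]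
  ring

lemma dotCS (u v : Fin n → ℂ) :
    ‖star u ⬝ᵥ v‖ ^ 2 ≤ sqn u * sqn v := by
  have h := norm_inner_le_norm (𝕜 := ℂ) ((WithLp.equiv 2 (Fin n → ℂ)).symm u)
    ((WithLp.equiv 2 (Fin n → ℂ)).symm v)
  rw [show inner ℂ ((WithLp.equiv 2 (Fin n → ℂ)).symm u) ((WithLp.equiv 2 (Fin n → ℂ)).symm v) = star u ⬝ᵥ v from
    (EuclideanSpace.inner_toLp_toLp u v).trans (dotProduct_comm _ _)] at h
  have hnu : ‖(WithLp.equiv 2 (Fin n → ℂ)).symm u‖ ^ 2 = sqn u := by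
    rw [EuclideanSpace.norm_eq, Real.sq_sqrt (Finset.sum_nonneg fun i _ => sq_nonneg _)]
    refine Finset.sum_congr rfl fun i _ => ?_
    rw [WithLp.equiv_symm_apply, WithLp.ofLp_toLp, Complex.sq_norm]
  have hnv : ‖(WithLp.equiv 2 (Fin n → ℂ)).symm v‖ ^ 2 = sqn v := by
    rw [EuclideanSpace.norm_eq, Real.sq_sqrt (Finset.sum_nonneg fun i _ => sq_nonneg _)]
    refine Finset.sum_congr rfl fun i _ => ?_
    rw [WithLp.equiv_symm_apply, WithLp.ofLp_toLp, Complex.sq_norm]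
  calc ‖star u ⬝ᵥ v‖ ^ 2
      ≤ (‖(WithLp.equiv 2 (Fin n → ℂ)).symm u‖ * ‖(WithLp.equiv 2 (Fin n → ℂ)).symm v‖) ^ 2 := by
        exact pow_le_pow_left₀ (norm_nonneg _) h 2
    _ = sqn u * sqn v := by rw [mul_pow, hnu, hnv]

lemma psdCS {M : Matrix (Fin n) (Fin n) ℂ} (hM : M.PosSemidef) (u v : Fin n → ℂ) :
    ‖star u ⬝ᵥ (M *ᵥ v)‖ ^ 2 ≤
      Complex.re (star u ⬝ᵥ (M *ᵥ u)) * Complex.re (star v ⬝ᵥ (M *ᵥ v)) := by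
  obtain ⟨B, rfl⟩ : ∃ B : Matrix (Fin n) (Fin n) ℂ, M = Bᴴ * B := by
    open scoped MatrixOrder Matrix.Norms.L2Operator in
    exact CStarAlgebra.nonneg_iff_eq_star_mul_self.mp hM.nonneg
  have key : ∀ a b : Fin n → ℂ, star a ⬝ᵥ ((Bᴴ * B) *ᵥ b) = star (B *ᵥ a) ⬝ᵥ (B *ᵥ b) := by
    intro a b
    rw [← mulVec_mulVec, dotProduct_mulVec, ← star_mulVec]
  rw [key u v, key u u, key v v, dotProduct_star_self, dotProduct_star_self]
  simp only [Complex.ofReal_re]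
  exact dotCS _ _


lemma sqrt_ineq {a b c d l : ℝ} (ha : 0 ≤ a) (hb : 0 ≤ b) (hc : 0 ≤ c) (hd : 0 ≤ d)
    (hl : 0 < l) :
    l * (Real.sqrt (a * c) + Real.sqrt (b * d)) ^ 2 ≤ (a + l * b) * (l * c + d) := by
  rw [Real.sqrt_mul ha, Real.sqrt_mul hb]
  have gen : ∀ s1 s2 s3 s4 : ℝ,
      l * (s1 * s3 + s2 * s4) ^ 2 ≤ (s1 ^ 2 + l * s2 ^ 2) * (l * s3 ^ 2 + s4 ^ 2) := by
    intro s1 s2 s3 s4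
    nlinarith [sq_nonneg (s1 * s4 - l * s2 * s3)]
  have h := gen (Real.sqrt a) (Real.sqrt b) (Real.sqrt c) (Real.sqrt d)
  rw [Real.sq_sqrt ha, Real.sq_sqrt hb, Real.sq_sqrt hc, Real.sq_sqrt hd] at h
  exact h

lemma one_sub_form (V : Matrix (Fin n) (Fin n) ℂ) (u v : Fin n → ℂ) :
    star u ⬝ᵥ ((1 - Vᴴ * V) *ᵥ v) = star u ⬝ᵥ v - star (V *ᵥ u) ⬝ᵥ (V *ᵥ v) := by
  rw [sub_mulVec, dotProduct_sub, one_mulVec, ← mulVec_mulVec, dotProduct_mulVec (star u),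
    ← star_mulVec]

lemma one_sub_psd {V : Matrix (Fin n) (Fin n) ℂ} (hV : ∀ v, sqn (V *ᵥ v) ≤ sqn v) :
    (1 - Vᴴ * V).PosSemidef := by
  refine Matrix.PosSemidef.of_dotProduct_mulVec_nonneg ?_ ?_
  · unfold Matrix.IsHermitian
    rw [conjTranspose_sub, conjTranspose_one, conjTranspose_mul, conjTranspose_conjTranspose]
  · intro v
    rw [one_sub_form, dotProduct_star_self, dotProduct_star_self, ← Complex.ofReal_sub]
    rw [Complex.zero_le_real]
    linarith [hV v]

lemma one_sub_form_self {V : Matrix (Fin n) (Fin n) ℂ} (u : Fin n → ℂ) :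
    star u ⬝ᵥ ((1 - Vᴴ * V) *ᵥ u) = ((sqn u - sqn (V *ᵥ u) : ℝ) : ℂ) := by
  rw [one_sub_form, dotProduct_star_self, dotProduct_star_self, ← Complex.ofReal_sub]

/-- The key resolvent-level inequality. -/
lemma key_resolvent (A V : Matrix (Fin n) (Fin n) ℂ) (hA : A.PosSemidef)
    (hV : ∀ v, sqn (V *ᵥ v) ≤ sqn v) (x : Fin n → ℂ) {l : ℝ} (hl : 0 < l) :
    ∑ j, hA.1.eigenvalues j / (hA.1.eigenvalues j + l) *
        Complex.normSq (coords hA.1 (V *ᵥ x) j) ≤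
      ∑ i, (hA.conjTranspose_mul_mul_same V).1.eigenvalues i /
          ((hA.conjTranspose_mul_mul_same V).1.eigenvalues i + l) *
          Complex.normSq (coords (hA.conjTranspose_mul_mul_same V).1 x i) := by
  set hBh := (hA.conjTranspose_mul_mul_same V).1 with hBh_def
  set μ : Fin n → ℝ := hBh.eigenvalues with hμ
  set ν : Fin n → ℝ := hA.1.eigenvalues with hν
  have μ0 : ∀ i, 0 ≤ μ i := fun i => (hA.conjTranspose_mul_mul_same V).eigenvalues_nonneg i
  have ν0 : ∀ j, 0 ≤ ν j := fun j => hA.eigenvalues_nonneg j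
  have μl : ∀ i, 0 < μ i + l := fun i => by linarith [μ0 i]
  have νl : ∀ j, 0 < ν j + l := fun j => by linarith [ν0 j]
  set b : Fin n → ℂ := coords hBh x with hb
  set p : Fin n → ℂ := coords hA.1 (V *ᵥ x) with hp
  set z : Fin n → ℂ := cfcM hBh (fun t => (t + l)⁻¹) *ᵥ x with hz
  have hc : coords hBh z = fun i => (((μ i + l)⁻¹ : ℝ) : ℂ) * b i :=
    coords_cfcM_mulVec hBh _ x
  set q : ℝ := ∑ i, (μ i + l)⁻¹ * Complex.normSq (b i) with hq
  set bq : ℝ := ∑ j, (ν j + l)⁻¹ * Complex.normSq (p j) with hbq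
  set r : Fin n → ℂ := coords hA.1 (V *ᵥ z) with hr
  set d' : ℝ := ∑ j, (ν j + l) * Complex.normSq (r j) with hd'
  have q0 : 0 ≤ q := Finset.sum_nonneg fun i _ =>
    mul_nonneg (inv_nonneg.2 (μl i).le) (Complex.normSq_nonneg _)
  have bq0 : 0 ≤ bq := Finset.sum_nonneg fun j _ =>
    mul_nonneg (inv_nonneg.2 (νl j).le) (Complex.normSq_nonneg _)
  have d'0 : 0 ≤ d' := Finset.sum_nonneg fun j _ =>
    mul_nonneg (νl j).le (Complex.normSq_nonneg _)
  -- f1 : star x ⬝ᵥ z = q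
  have f1 : star x ⬝ᵥ z = ((q : ℝ) : ℂ) := quadform hBh _ x
  -- f2 : sqn z
  have f2 : sqn z = ∑ i, ((μ i + l)⁻¹) ^ 2 * Complex.normSq (b i) := by
    rw [← sqn_coords hBh z, sqn, hc]
    refine Finset.sum_congr rfl fun i _ => ?_
    rw [Complex.normSq_mul, Complex.normSq_ofReal]
    ring
  -- T-decomposition
  set T1 : ℂ := star x ⬝ᵥ ((1 - Vᴴ * V) *ᵥ z) with hT1
  set T2 : ℂ := star (V *ᵥ x) ⬝ᵥ (V *ᵥ z) with hT2
  have hdec : star x ⬝ᵥ z = T1 + T2 := by rw [hT1, one_sub_form]; ring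
  -- f4
  have f4 : ‖T1‖ ^ 2 ≤ (sqn x - sqn (V *ᵥ x)) * (sqn z - sqn (V *ᵥ z)) := by
    have := psdCS (one_sub_psd hV) x z
    rwa [one_sub_form_self, one_sub_form_self, Complex.ofReal_re, Complex.ofReal_re] at this
  -- f5
  have f5 : ‖T2‖ ^ 2 ≤ bq * d' := by
    have hTpr : T2 = star p ⬝ᵥ r := (dotProduct_coords hA.1 (V *ᵥ x) (V *ᵥ z)).symm
    set u' : Fin n → ℂ := fun j => (((Real.sqrt (ν j + l) : ℝ) : ℂ))⁻¹ * p j with hu'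
    set v' : Fin n → ℂ := fun j => ((Real.sqrt (ν j + l) : ℝ) : ℂ) * r j with hv'
    have hsne : ∀ j, (((Real.sqrt (ν j + l) : ℝ) : ℂ)) ≠ 0 := fun j => by
      simp only [ne_eq, Complex.ofReal_eq_zero]
      exact (Real.sqrt_pos.2 (νl j)).ne'
    have heq : star u' ⬝ᵥ v' = star p ⬝ᵥ r := by
      simp only [dotProduct, Pi.star_apply, hu', hv']
      refine Finset.sum_congr rfl fun j _ => ?_
      rw [star_mul', star_inv₀]
      rw [RCLike.star_def, Complex.conj_ofReal]
      field_simp [hsne j]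
    have hsqu : sqn u' = bq := by
      rw [sqn]
      refine Finset.sum_congr rfl fun j _ => ?_
      rw [hu']
      simp only [Complex.normSq_mul, Complex.normSq_inv, Complex.normSq_ofReal]
      rw [Real.mul_self_sqrt (νl j).le]
    have hsqv : sqn v' = d' := by
      rw [sqn]
      refine Finset.sum_congr rfl fun j _ => ?_
      rw [hv']
      simp only [Complex.normSq_mul, Complex.normSq_ofReal]
      rw [Real.mul_self_sqrt (νl j).le]
    calc ‖T2‖ ^ 2 = ‖star u' ⬝ᵥ v'‖ ^ 2 := by rw [heq, hTpr]
      _ ≤ sqn u' * sqn v' := dotCS _ _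
      _ = bq * d' := by rw [hsqu, hsqv]
  -- f6
  have f6 : l * (sqn z - sqn (V *ᵥ z)) + d' = q := by
    have e1 : star (V *ᵥ z) ⬝ᵥ (A *ᵥ (V *ᵥ z)) = ((∑ j, ν j * Complex.normSq (r j) : ℝ) : ℂ) := by
      conv_lhs => rw [← cfcM_id hA.1]
      exact quadform hA.1 _ (V *ᵥ z)
    have e2 : star z ⬝ᵥ ((Vᴴ * A * V) *ᵥ z) =
        ((∑ i, μ i * Complex.normSq (coords hBh z i) : ℝ) : ℂ) := by
      conv_lhs => rw [← cfcM_id hBh]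
      exact quadform hBh _ z
    have e3 : star z ⬝ᵥ ((Vᴴ * A * V) *ᵥ z) = star (V *ᵥ z) ⬝ᵥ (A *ᵥ (V *ᵥ z)) := by
      rw [← mulVec_mulVec, ← mulVec_mulVec, dotProduct_mulVec (star z), ← star_mulVec]
    have e4 : ∑ j, ν j * Complex.normSq (r j) =
        ∑ i, μ i * Complex.normSq (coords hBh z i) := by
      have h := (e1.symm.trans (e3.symm.trans e2))
      exact_mod_cast h
    have e5 : sqn (V *ᵥ z) = ∑ j, Complex.normSq (r j) := (sqn_coords hA.1 _).symm
    have e6 : ∀ i, Complex.normSq (coords hBh z i) = ((μ i + l)⁻¹) ^ 2 * Complex.normSq (b i) := by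
      intro i
      rw [hc]
      simp only [Complex.normSq_mul, Complex.normSq_ofReal]
      ring
    have e46 : ∑ j, ν j * Complex.normSq (r j) =
        ∑ i, μ i * (((μ i + l)⁻¹) ^ 2 * Complex.normSq (b i)) := by
      rw [e4]
      exact Finset.sum_congr rfl fun i _ => by rw [e6 i]
    have expand : ∑ j, (ν j + l) * Complex.normSq (r j) =
        ∑ j, ν j * Complex.normSq (r j) + l * ∑ j, Complex.normSq (r j) := by
      rw [Finset.mul_sum, ← Finset.sum_add_distrib]
      exact Finset.sum_congr rfl fun j _ => by ring
    have merge : l * ∑ i, ((μ i + l)⁻¹) ^ 2 * Complex.normSq (b i) +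
        ∑ i, μ i * (((μ i + l)⁻¹) ^ 2 * Complex.normSq (b i)) =
        ∑ i, (μ i + l)⁻¹ * Complex.normSq (b i) := by
      rw [Finset.mul_sum, ← Finset.sum_add_distrib]
      refine Finset.sum_congr rfl fun i _ => ?_
      field_simp [(μl i).ne']
      ring
    rw [hd', f2, e5, expand, e46, hq]
    linarith [merge]
  -- assembly
  have a0 : 0 ≤ sqn x - sqn (V *ᵥ x) := by linarith [hV x]
  have c0 : 0 ≤ sqn z - sqn (V *ᵥ z) := by linarith [hV z]
  have habs : ‖star x ⬝ᵥ z‖ = q := by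
    rw [f1, Complex.norm_real, Real.norm_eq_abs, abs_of_nonneg q0]
  have htri : q ≤ ‖T1‖ + ‖T2‖ := by
    rw [← habs, hdec]
    exact norm_add_le T1 T2
  have hT1' : ‖T1‖ ≤
      Real.sqrt ((sqn x - sqn (V *ᵥ x)) * (sqn z - sqn (V *ᵥ z))) := by
    rw [← Real.sqrt_sq (norm_nonneg T1)]
    exact Real.sqrt_le_sqrt f4
  have hT2' : ‖T2‖ ≤ Real.sqrt (bq * d') := by
    rw [← Real.sqrt_sq (norm_nonneg T2)]
    exact Real.sqrt_le_sqrt f5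
  have key : l * q ≤ (sqn x - sqn (V *ᵥ x)) + l * bq := by
    rcases eq_or_lt_of_le q0 with hq0 | hq0
    · rw [← hq0, mul_zero]
      have := mul_nonneg hl.le bq0
      linarith
    · have hle : q ≤ Real.sqrt ((sqn x - sqn (V *ᵥ x)) * (sqn z - sqn (V *ᵥ z))) +
          Real.sqrt (bq * d') := le_trans htri (add_le_add hT1' hT2')
      have hsq : q ^ 2 ≤ (Real.sqrt ((sqn x - sqn (V *ᵥ x)) * (sqn z - sqn (V *ᵥ z))) +
          Real.sqrt (bq * d')) ^ 2 := by
        apply pow_le_pow_left₀ q0 hle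
      have step : l * q ^ 2 ≤ ((sqn x - sqn (V *ᵥ x)) + l * bq) * q := by
        calc l * q ^ 2 ≤ l * (Real.sqrt ((sqn x - sqn (V *ᵥ x)) * (sqn z - sqn (V *ᵥ z))) +
              Real.sqrt (bq * d')) ^ 2 := by
              exact mul_le_mul_of_nonneg_left hsq hl.le
          _ ≤ ((sqn x - sqn (V *ᵥ x)) + l * bq) * (l * (sqn z - sqn (V *ᵥ z)) + d') :=
              sqrt_ineq a0 bq0 c0 d'0 hl
          _ = ((sqn x - sqn (V *ᵥ x)) + l * bq) * q := by rw [f6]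
      nlinarith [step, hq0]
  have lhs_eq : ∑ j, ν j / (ν j + l) * Complex.normSq (p j) = sqn (V *ᵥ x) - l * bq := by
    rw [← sqn_coords hA.1 (V *ᵥ x), sqn, hbq, Finset.mul_sum, ← Finset.sum_sub_distrib]
    refine Finset.sum_congr rfl fun j _ => ?_
    field_simp [(νl j).ne']
    ring
  have rhs_eq : ∑ i, μ i / (μ i + l) * Complex.normSq (b i) = sqn x - l * q := by
    rw [← sqn_coords hBh x, sqn, hq, Finset.mul_sum, ← Finset.sum_sub_distrib]
    refine Finset.sum_congr rfl fun i _ => ?_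
    field_simp [(μl i).ne']
    ring
  rw [lhs_eq, rhs_eq]
  linarith [key]


open MeasureTheory Set in
lemma base_integrable {α : ℝ} (hα0 : 0 < α) (hα1 : α < 1) :
    IntegrableOn (fun s : ℝ => s ^ (α - 1) / (1 + s)) (Ioi 0) volume := by
  have fcont : ContinuousOn (fun s : ℝ => s ^ (α - 1) / (1 + s)) (Ioi 0) := by
    apply ContinuousOn.div
    · exact fun s hs =>
        (Real.continuousAt_rpow_const s _ (Or.inl (ne_of_gt hs))).continuousWithinAt
    · exact (continuous_const.add continuous_id).continuousOn
    · intro s hs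
      have : (0 : ℝ) < s := hs
      linarith
  rw [← Ioc_union_Ioi_eq_Ioi (zero_le_one (α := ℝ)), integrableOn_union]
  constructor
  · have h1 : IntegrableOn (fun s : ℝ => s ^ (α - 1)) (Ioc 0 1) volume := by
      have := intervalIntegral.intervalIntegrable_rpow' (a := 0) (b := 1)
        (by linarith : (-1 : ℝ) < α - 1)
      rwa [intervalIntegrable_iff_integrableOn_Ioc_of_le zero_le_one] at this
    refine Integrable.mono' h1
      ((fcont.mono (fun s hs => hs.1)).aestronglyMeasurable measurableSet_Ioc) ?_
    rw [ae_restrict_iff' measurableSet_Ioc]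
    refine ae_of_all _ fun s hs => ?_
    have hs0 : 0 < s := hs.1
    have hnn : 0 ≤ s ^ (α - 1) / (1 + s) :=
      div_nonneg (Real.rpow_nonneg hs0.le _) (by linarith)
    rw [Real.norm_eq_abs, abs_of_nonneg hnn]
    exact div_le_self (Real.rpow_nonneg hs0.le _) (by linarith)
  · have h2 : IntegrableOn (fun s : ℝ => s ^ (α - 2)) (Ioi 1) volume :=
      integrableOn_Ioi_rpow_of_lt (by linarith) zero_lt_one
    refine Integrable.mono' h2
      ((fcont.mono (fun s (hs : s ∈ Ioi (1:ℝ)) => (lt_trans zero_lt_one hs : (0:ℝ) < s))).aestronglyMeasurable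
        measurableSet_Ioi) ?_
    rw [ae_restrict_iff' measurableSet_Ioi]
    refine ae_of_all _ fun s hs => ?_
    have hs1 : (1 : ℝ) < s := hs
    have hs0 : (0 : ℝ) < s := by linarith
    have hnn : 0 ≤ s ^ (α - 1) / (1 + s) :=
      div_nonneg (Real.rpow_nonneg hs0.le _) (by linarith)
    rw [Real.norm_eq_abs, abs_of_nonneg hnn]
    have hstep : s ^ (α - 1) / (1 + s) ≤ s ^ (α - 1) / s :=
      div_le_div_of_nonneg_left (Real.rpow_nonneg hs0.le _) hs0 (by linarith)
    have heq : s ^ (α - 2) = s ^ (α - 1) / s := by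
      rw [div_eq_mul_inv, ← Real.rpow_neg_one s, ← Real.rpow_add hs0]
      congr 1
      ring
    linarith [hstep, heq.ge]

open MeasureTheory Set in
/-- The normalization constant. -/
noncomputable def I0 (α : ℝ) : ℝ := ∫ s in Ioi (0 : ℝ), s ^ (α - 1) / (1 + s)

open MeasureTheory Set in
lemma I0_pos {α : ℝ} (hα0 : 0 < α) (hα1 : α < 1) : 0 < I0 α := by
  have hbase := base_integrable hα0 hα1
  set c : ℝ := (2 : ℝ) ^ (α - 1) / 3 with hcdef
  have hc : 0 < c := div_pos (Real.rpow_pos_of_pos two_pos _) (by norm_num)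
  have h1 : c ≤ ∫ s in Ioc (1 : ℝ) 2, s ^ (α - 1) / (1 + s) := by
    have hconst : IntegrableOn (fun _ : ℝ => c) (Ioc 1 2) volume := integrableOn_const (by
      rw [Real.volume_Ioc]; exact ENNReal.ofReal_ne_top)
    have hsub : Ioc (1 : ℝ) 2 ⊆ Ioi 0 := fun s hs => lt_trans zero_lt_one hs.1
    have hmono := setIntegral_mono_on hconst (hbase.mono_set hsub) measurableSet_Ioc
      (fun s hs => ?_)
    · calc c = ∫ _ in Ioc (1 : ℝ) 2, c := by
            rw [setIntegral_const, Real.volume_real_Ioc]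
            norm_num
        _ ≤ _ := hmono
    · have hs0 : (0 : ℝ) < s := lt_trans zero_lt_one hs.1
      refine div_le_div₀ (Real.rpow_nonneg hs0.le _)
        (Real.rpow_le_rpow_of_nonpos hs0 hs.2 (by linarith)) (by linarith) (by linarith [hs.2])
  have h2 : (∫ s in Ioc (1 : ℝ) 2, s ^ (α - 1) / (1 + s)) ≤ I0 α := by
    refine setIntegral_mono_set hbase ?_ ?_
    · rw [Filter.EventuallyLE]
      rw [ae_restrict_iff' measurableSet_Ioi]
      refine ae_of_all _ fun s hs => ?_
      simp only [Set.mem_Ioi] at hs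
      simp only [Pi.zero_apply]
      exact div_nonneg (Real.rpow_nonneg hs.le _) (by linarith)
    · exact HasSubset.Subset.eventuallyLE fun s hs => lt_trans zero_lt_one hs.1
  linarith

open MeasureTheory Set in
lemma f_comp_eq {α μ : ℝ} (hμ : 0 < μ) :
    ∀ x ∈ Ioi (0 : ℝ), x ^ (α - 1) * (μ / (μ + x)) =
      (fun y : ℝ => μ ^ (α - 1) * (y ^ (α - 1) / (1 + y))) (μ⁻¹ * x) := by
  intro x hx
  have hx0 : (0 : ℝ) < x := hx
  simp only []
  rw [Real.mul_rpow (inv_nonneg.2 hμ.le) hx0.le]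
  have h2 : μ ^ (α - 1) * (μ⁻¹) ^ (α - 1) = 1 := by
    rw [← Real.mul_rpow hμ.le (inv_nonneg.2 hμ.le), mul_inv_cancel₀ hμ.ne', Real.one_rpow]
  have h3 : 1 + μ⁻¹ * x = μ⁻¹ * (μ + x) := by
    field_simp
  rw [h3]
  have hμx : (0 : ℝ) < μ + x := by linarith
  have h4 : μ ^ (α - 1) * ((μ⁻¹ ^ (α - 1) * x ^ (α - 1)) / (μ⁻¹ * (μ + x))) =
      (μ ^ (α - 1) * μ⁻¹ ^ (α - 1)) * (x ^ (α - 1) / (μ⁻¹ * (μ + x))) := by ring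
  rw [h4, h2, one_mul]
  field_simp

open MeasureTheory Set in
lemma f_integrable {α : ℝ} (hα0 : 0 < α) (hα1 : α < 1) {μ : ℝ} (hμ : 0 ≤ μ) :
    IntegrableOn (fun l : ℝ => l ^ (α - 1) * (μ / (μ + l))) (Ioi 0) volume := by
  rcases eq_or_lt_of_le hμ with h | h
  · have : (fun l : ℝ => l ^ (α - 1) * (μ / (μ + l))) = fun _ => (0 : ℝ) := by
      funext l
      rw [← h]
      simp
    rw [this]
    exact integrableOn_zero
  · have hbase := (base_integrable hα0 hα1).const_mul (μ ^ (α - 1))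
    have hiff := integrableOn_Ioi_comp_mul_left_iff
      (fun y : ℝ => μ ^ (α - 1) * (y ^ (α - 1) / (1 + y))) 0 (inv_pos.2 h)
    rw [mul_zero] at hiff
    have := hiff.2 hbase
    exact (integrableOn_congr_fun (f_comp_eq h) measurableSet_Ioi).2 this

open MeasureTheory Set in
lemma f_integral {α : ℝ} (hα0 : 0 < α) (hα1 : α < 1) {μ : ℝ} (hμ : 0 ≤ μ) :
    (∫ l in Ioi (0 : ℝ), l ^ (α - 1) * (μ / (μ + l))) = μ ^ α * I0 α := by
  rcases eq_or_lt_of_le hμ with h | h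
  · have : (fun l : ℝ => l ^ (α - 1) * (μ / (μ + l))) = fun _ => (0 : ℝ) := by
      funext l
      rw [← h]
      simp
    rw [this, ← h]
    simp [Real.zero_rpow hα0.ne']
  · rw [setIntegral_congr_fun measurableSet_Ioi (f_comp_eq h)]
    rw [integral_comp_mul_left_Ioi (fun y : ℝ => μ ^ (α - 1) * (y ^ (α - 1) / (1 + y))) 0
      (inv_pos.2 h)]
    rw [mul_zero, inv_inv, smul_eq_mul, MeasureTheory.integral_const_mul]
    have hpow : μ ^ α = μ * μ ^ (α - 1) := by
      conv_lhs => rw [show α = 1 + (α - 1) by ring]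
      rw [Real.rpow_add h, Real.rpow_one]
    rw [show (∫ s in Ioi (0 : ℝ), s ^ (α - 1) / (1 + s)) = I0 α from rfl, hpow]
    ring


lemma sqn_eq (w : Fin n → ℂ) : sqn w = ‖(WithLp.equiv 2 (Fin n → ℂ)).symm w‖ ^ 2 := by
  rw [EuclideanSpace.norm_eq, Real.sq_sqrt (Finset.sum_nonneg fun i _ => sq_nonneg _)]
  refine Finset.sum_congr rfl fun i _ => ?_
  rw [WithLp.equiv_symm_apply, WithLp.ofLp_toLp, Complex.sq_norm]

lemma contraction_sqn {V : Matrix (Fin n) (Fin n) ℂ}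
    (hV : ‖Matrix.toEuclideanCLM (𝕜 := ℂ) V‖ ≤ 1) (v : Fin n → ℂ) :
    sqn (V *ᵥ v) ≤ sqn v := by
  have h := (Matrix.toEuclideanCLM (𝕜 := ℂ) V).le_opNorm ((WithLp.equiv 2 (Fin n → ℂ)).symm v)
  rw [WithLp.equiv_symm_apply, Matrix.toEuclideanCLM_toLp] at h
  have h2 : ‖(WithLp.equiv 2 (Fin n → ℂ)).symm (V *ᵥ v)‖ ≤
      ‖(WithLp.equiv 2 (Fin n → ℂ)).symm v‖ := by
    refine le_trans h ?_
    calc ‖Matrix.toEuclideanCLM (𝕜 := ℂ) V‖ * ‖(WithLp.equiv 2 (Fin n → ℂ)).symm v‖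
        ≤ 1 * ‖(WithLp.equiv 2 (Fin n → ℂ)).symm v‖ :=
          mul_le_mul_of_nonneg_right hV (norm_nonneg _)
      _ = _ := one_mul _
  rw [sqn_eq, sqn_eq]
  exact pow_le_pow_left₀ (norm_nonneg _) h2 2

end HansenAux

/-- The real power of a Hermitian matrix, via the spectral decomposition. -/
noncomputable def matPow {n : ℕ} {A : Matrix (Fin n) (Fin n) ℂ} (hA : A.IsHermitian) (s : ℝ) :
    Matrix (Fin n) (Fin n) ℂ :=
  (hA.eigenvectorUnitary : Matrix (Fin n) (Fin n) ℂ) *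
    Matrix.diagonal (fun i => ((hA.eigenvalues i ^ s : ℝ) : ℂ)) *
    star (hA.eigenvectorUnitary : Matrix (Fin n) (Fin n) ℂ)

open HansenAux MeasureTheory Set

lemma matPow_eq_cfcM {n : ℕ} {A : Matrix (Fin n) (Fin n) ℂ} (hA : A.IsHermitian) (s : ℝ) :
    matPow hA s = cfcM hA (fun t => t ^ s) := rfl

/-- Hansen's inequality: for `A` positive semidefinite, `V` a contraction (operator norm at
most one), and `0 < α ≤ 1`, one has `V† A^α V ≤ (V† A V)^α` in the Loewner order. -/
theorem hansen_inequality {n : ℕ} (A V : Matrix (Fin n) (Fin n) ℂ) (hA : A.PosSemidef)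
    (hV : ‖Matrix.toEuclideanCLM (𝕜 := ℂ) V‖ ≤ 1) (α : ℝ) (hα0 : 0 < α) (hα1 : α ≤ 1) :
    (matPow (hA.conjTranspose_mul_mul_same V).1 α - Vᴴ * matPow hA.1 α * V).PosSemidef := by
  have hV' : ∀ v, sqn (V *ᵥ v) ≤ sqn v := contraction_sqn hV
  rcases eq_or_lt_of_le hα1 with hα | hαlt
  · -- α = 1
    subst hα
    have e1 : matPow (hA.conjTranspose_mul_mul_same V).1 1 = Vᴴ * A * V := by
      rw [matPow_eq_cfcM, cfcM_congr _ (g := fun t => t) (fun i => Real.rpow_one _), cfcM_id]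
    have e2 : matPow hA.1 1 = A := by
      rw [matPow_eq_cfcM, cfcM_congr _ (g := fun t => t) (fun i => Real.rpow_one _), cfcM_id]
    rw [e1, e2, sub_self]
    exact Matrix.PosSemidef.zero
  · rw [matPow_eq_cfcM, matPow_eq_cfcM]
    set hBh := (hA.conjTranspose_mul_mul_same V).1 with hBh_def
    set μ : Fin n → ℝ := hBh.eigenvalues with hμ
    set ν : Fin n → ℝ := hA.1.eigenvalues with hν
    have μ0 : ∀ i, 0 ≤ μ i := fun i => (hA.conjTranspose_mul_mul_same V).eigenvalues_nonneg i
    have ν0 : ∀ j, 0 ≤ ν j := fun j => hA.eigenvalues_nonneg j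
    refine Matrix.PosSemidef.of_dotProduct_mulVec_nonneg ?_ ?_
    · exact (cfcM_isHermitian hBh _).sub
        (Matrix.isHermitian_conjTranspose_mul_mul V (cfcM_isHermitian hA.1 _))
    intro x
    set b : Fin n → ℂ := coords hBh x with hb
    set p : Fin n → ℂ := coords hA.1 (V *ᵥ x) with hp
    rw [Matrix.sub_mulVec, dotProduct_sub]
    have h1 : star x ⬝ᵥ (cfcM hBh (fun t => t ^ α) *ᵥ x) =
        ((∑ i, μ i ^ α * Complex.normSq (b i) : ℝ) : ℂ) := quadform hBh _ x
    have h2 : star x ⬝ᵥ ((Vᴴ * cfcM hA.1 (fun t => t ^ α) * V) *ᵥ x) =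
        ((∑ j, ν j ^ α * Complex.normSq (p j) : ℝ) : ℂ) := by
      have e3 : star x ⬝ᵥ ((Vᴴ * cfcM hA.1 (fun t => t ^ α) * V) *ᵥ x) =
          star (V *ᵥ x) ⬝ᵥ (cfcM hA.1 (fun t => t ^ α) *ᵥ (V *ᵥ x)) := by
        rw [← Matrix.mulVec_mulVec, ← Matrix.mulVec_mulVec, Matrix.dotProduct_mulVec (star x),
          ← Matrix.star_mulVec]
      rw [e3]
      exact quadform hA.1 _ (V *ᵥ x)
    rw [h1, h2, ← Complex.ofReal_sub, Complex.zero_le_real, sub_nonneg]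
    -- the key real inequality via integral representation
    have hI := I0_pos hα0 hαlt
    set G1 : ℝ → ℝ := fun l => ∑ j, l ^ (α - 1) * (ν j / (ν j + l)) * Complex.normSq (p j)
      with hG1
    set G2 : ℝ → ℝ := fun l => ∑ i, l ^ (α - 1) * (μ i / (μ i + l)) * Complex.normSq (b i)
      with hG2
    have hG1int : IntegrableOn G1 (Ioi 0) volume := by
      apply integrable_finset_sum
      intro j _
      exact (f_integrable hα0 hαlt (ν0 j)).mul_const _
    have hG2int : IntegrableOn G2 (Ioi 0) volume := by
      apply integrable_finset_sum
      intro i _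
      exact (f_integrable hα0 hαlt (μ0 i)).mul_const _
    have hG1val : (∫ l in Ioi (0 : ℝ), G1 l) =
        (∑ j, ν j ^ α * Complex.normSq (p j)) * I0 α := by
      rw [hG1, integral_finset_sum _ (fun j _ => (f_integrable hα0 hαlt (ν0 j)).mul_const _),
        Finset.sum_mul]
      refine Finset.sum_congr rfl fun j _ => ?_
      rw [MeasureTheory.integral_mul_const, f_integral hα0 hαlt (ν0 j)]
      ring
    have hG2val : (∫ l in Ioi (0 : ℝ), G2 l) =
        (∑ i, μ i ^ α * Complex.normSq (b i)) * I0 α := by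
      rw [hG2, integral_finset_sum _ (fun i _ => (f_integrable hα0 hαlt (μ0 i)).mul_const _),
        Finset.sum_mul]
      refine Finset.sum_congr rfl fun i _ => ?_
      rw [MeasureTheory.integral_mul_const, f_integral hα0 hαlt (μ0 i)]
      ring
    have hmono : (∫ l in Ioi (0 : ℝ), G1 l) ≤ ∫ l in Ioi (0 : ℝ), G2 l := by
      refine setIntegral_mono_on hG1int hG2int measurableSet_Ioi fun l hl => ?_
      have hl0 : (0 : ℝ) < l := hl
      have key := key_resolvent A V hA hV' x hl0
      have e1 : G1 l = l ^ (α - 1) * ∑ j, ν j / (ν j + l) * Complex.normSq (p j) := by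
        rw [hG1, Finset.mul_sum]
        exact Finset.sum_congr rfl fun j _ => by ring
      have e2 : G2 l = l ^ (α - 1) * ∑ i, μ i / (μ i + l) * Complex.normSq (b i) := by
        rw [hG2, Finset.mul_sum]
        exact Finset.sum_congr rfl fun i _ => by ring
      rw [e1, e2]
      exact mul_le_mul_of_nonneg_left key (Real.rpow_nonneg hl0.le _)
    rw [hG1val, hG2val] at hmono
    exact le_of_mul_le_mul_right hmono hI
end
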